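/- Let R > 0, H ∈ ℝ, C ∈ ℝ and a ∈ (0,R). Define U on the closed disk r ≤ R by U(x,y) = C(r² − a²) + 2Ca²·ln(a/R) + H for 0 ≤ r ≤ a, and U(x,y) = 2Ca²·ln(r/R) + H for a ≤ r ≤ R. Then U is continuously differentiable on the open disk r < R, satisfies the wave equation ∂²U/∂x² − ∂²U/∂y² = 0 in the open disk r < a, satisfies the Laplace equation ∂²U/∂x² + ∂²U/∂y² = 0 in the open annulus a < r < R, and equals H on the boundary circle r = R. In particular (∂²U/∂x²)² − (∂²U/∂y²)² = 0 holds in both open regions, so U solves the Dirichlet problem for equation (2) with constant boundary data H. -/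

import Mathlib

/-!
`U` depends on `t = r²` only: `U = C · linLog (a²) t + const`, where `linLog c` glues the
linear function `t - c` to `c log (t / c)` at `t = c`, where both have slope `1`; hence `U`
is `C¹`. For a radial function `g (x² + y²)` one has `∂²U/∂x² = 2g' + 4x²g''` and
`∂²U/∂y² = 2g' + 4y²g''`.
In the disk `r < a` we have `g'' = 0`, so the two second derivatives agree; in the annulus
`g' = k/t` and `g'' = -k/t²`, so their sum `4g' + 4t g''` vanishes.
-/

/-- Second partial derivative of `U` in the first (x) variable. -/
noncomputable def pxx (U : ℝ × ℝ → ℝ) (p : ℝ × ℝ) : ℝ :=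
  deriv (deriv (fun x => U (x, p.2))) p.1

/-- Second partial derivative of `U` in the second (y) variable. -/
noncomputable def pyy (U : ℝ × ℝ → ℝ) (p : ℝ × ℝ) : ℝ :=
  deriv (deriv (fun y => U (p.1, y))) p.2

open Filter Set Real

noncomputable def linLog (c t : ℝ) : ℝ :=
  if t ≤ c then t - c else c * log (t / c)

section linLog

variable {c : ℝ}

theorem hasDerivAt_linLog (hc : 0 < c) (t : ℝ) : HasDerivAt (linLog c) (c / max t c) t := by
  have hlin : ∀ s, HasDerivAt (fun s => s - c) 1 s := fun s => (hasDerivAt_id s).sub_const c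
  have hlog : ∀ s, s ≠ 0 → HasDerivAt (fun s => c * log (s / c)) (c / s) s := fun s hs => by
    refine (((hasDerivAt_id' s).div_const c).log (div_ne_zero hs hc.ne')).const_mul c
      |>.congr_deriv ?_
    field_simp
  rcases lt_trichotomy t c with h | rfl | h
  · rw [max_eq_right h.le, div_self hc.ne']
    refine (hlin t).congr_of_eventuallyEq ?_
    filter_upwards [eventually_lt_nhds h] with s hs
    exact if_pos hs.le
  · rw [max_self, div_self hc.ne']
    have hleft : HasDerivWithinAt (linLog t) 1 (Iic t) t :=
      (hlin t).hasDerivWithinAt.congr (fun s hs => if_pos hs) (if_pos le_rfl)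
    have hright : HasDerivWithinAt (linLog t) 1 (Ici t) t := by
      have h := (hlog t hc.ne').hasDerivWithinAt (s := Ici t)
      rw [div_self hc.ne'] at h
      refine h.congr (fun s hs => ?_) (by simp [linLog])
      rcases (mem_Ici.mp hs).eq_or_lt with rfl | hs
      · simp [linLog]
      · exact if_neg (not_le.mpr hs)
    simpa using hleft.union hright
  · rw [max_eq_left h.le]
    refine (hlog t (hc.trans h).ne').congr_of_eventuallyEq ?_
    filter_upwards [eventually_gt_nhds h] with s hs
    exact if_neg (not_le.mpr hs)

theorem contDiff_linLog (hc : 0 < c) : ContDiff ℝ 1 (linLog c) := by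
  refine contDiff_one_iff_deriv.mpr
    ⟨fun t => (hasDerivAt_linLog hc t).differentiableAt, ?_⟩
  rw [funext fun t => (hasDerivAt_linLog hc t).deriv]
  exact continuous_const.div (continuous_id.max continuous_const)
    fun t => (hc.trans_le (le_max_right t c)).ne'

theorem hasDerivAt_div_max_of_lt {t : ℝ} (h : t < c) :
    HasDerivAt (fun s => c / max s c) 0 t := by
  refine (hasDerivAt_const t (c / c)).congr_of_eventuallyEq ?_
  filter_upwards [eventually_lt_nhds h] with s hs
  rw [max_eq_right hs.le]

theorem hasDerivAt_div_max_of_gt (hc : 0 ≤ c) {t : ℝ} (h : c < t) :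
    HasDerivAt (fun s => c / max s c) (-c / t ^ 2) t := by
  have hinv := (hasDerivAt_inv (hc.trans_lt h).ne').const_mul c
  rw [mul_neg, ← div_eq_mul_inv, ← neg_div] at hinv
  refine hinv.congr_of_eventuallyEq ?_
  filter_upwards [eventually_gt_nhds h] with s hs
  rw [max_eq_left hs.le, div_eq_mul_inv]

end linLog

section radial

variable {g g' : ℝ → ℝ} {g'' : ℝ}

theorem deriv_deriv_comp_sq_add (hg : ∀ t, HasDerivAt g (g' t) t) {b x : ℝ}
    (hg' : HasDerivAt g' g'' (x ^ 2 + b)) :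
    deriv (deriv fun s => g (s ^ 2 + b)) x = 2 * g' (x ^ 2 + b) + 4 * x ^ 2 * g'' := by
  have hsq : ∀ s : ℝ, HasDerivAt (fun s => s ^ 2 + b) (2 * s) s := fun s => by
    simpa using (hasDerivAt_pow 2 s).add_const b
  have hfirst : deriv (fun s => g (s ^ 2 + b)) = fun s => g' (s ^ 2 + b) * (2 * s) :=
    funext fun s => ((hg _).comp s (hsq s)).deriv
  have hsecond : HasDerivAt (fun s => g' (s ^ 2 + b) * (2 * s))
      (g'' * (2 * x) * (2 * x) + g' (x ^ 2 + b) * 2) x := by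
    simpa using (hg'.comp x (hsq x)).fun_mul ((hasDerivAt_id' x).const_mul 2)
  rw [hfirst, hsecond.deriv]
  ring

theorem pxx_comp_sq_add_sq (hg : ∀ t, HasDerivAt g (g' t) t) {p : ℝ × ℝ}
    (hg' : HasDerivAt g' g'' (p.1 ^ 2 + p.2 ^ 2)) :
    pxx (fun q => g (q.1 ^ 2 + q.2 ^ 2)) p = 2 * g' (p.1 ^ 2 + p.2 ^ 2) + 4 * p.1 ^ 2 * g'' :=
  deriv_deriv_comp_sq_add hg hg'

theorem pyy_comp_sq_add_sq (hg : ∀ t, HasDerivAt g (g' t) t) {p : ℝ × ℝ}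
    (hg' : HasDerivAt g' g'' (p.1 ^ 2 + p.2 ^ 2)) :
    pyy (fun q => g (q.1 ^ 2 + q.2 ^ 2)) p = 2 * g' (p.1 ^ 2 + p.2 ^ 2) + 4 * p.2 ^ 2 * g'' := by
  simp only [pyy, add_comm (p.1 ^ 2)] at hg' ⊢
  exact deriv_deriv_comp_sq_add hg hg'

theorem pxx_sub_pyy_comp_sq_add_sq (hg : ∀ t, HasDerivAt g (g' t) t) {p : ℝ × ℝ}
    (hg' : HasDerivAt g' g'' (p.1 ^ 2 + p.2 ^ 2)) :
    pxx (fun q => g (q.1 ^ 2 + q.2 ^ 2)) p - pyy (fun q => g (q.1 ^ 2 + q.2 ^ 2)) p =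
      4 * (p.1 ^ 2 - p.2 ^ 2) * g'' := by
  rw [pxx_comp_sq_add_sq hg hg', pyy_comp_sq_add_sq hg hg']
  ring

theorem pxx_add_pyy_comp_sq_add_sq (hg : ∀ t, HasDerivAt g (g' t) t) {p : ℝ × ℝ}
    (hg' : HasDerivAt g' g'' (p.1 ^ 2 + p.2 ^ 2)) :
    pxx (fun q => g (q.1 ^ 2 + q.2 ^ 2)) p + pyy (fun q => g (q.1 ^ 2 + q.2 ^ 2)) p =
      4 * g' (p.1 ^ 2 + p.2 ^ 2) + 4 * (p.1 ^ 2 + p.2 ^ 2) * g'' := by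
  rw [pxx_comp_sq_add_sq hg hg', pyy_comp_sq_add_sq hg hg']
  ring

end radial

theorem model_profile_eq_linLog {R a : ℝ} (C H : ℝ) (hR : R ≠ 0) (ha : 0 < a) (t : ℝ) :
    (if t ≤ a ^ 2 then C * (t - a ^ 2) + 2 * C * a ^ 2 * log (a / R) + H
      else 2 * C * a ^ 2 * log (sqrt t / R) + H) =
      C * linLog (a ^ 2) t + (2 * C * a ^ 2 * log (a / R) + H) := by
  unfold linLog
  split_ifs with ht
  · ring
  · have ht0 : 0 < t := (pow_pos ha 2).trans (not_le.mp ht)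
    rw [log_div (sqrt_pos.mpr ht0).ne' hR, log_div ht0.ne' (pow_pos ha 2).ne', log_div ha.ne' hR,
      log_sqrt ht0.le, log_pow]
    push_cast
    ring

/-- The piecewise function `U = C(r² - a²) + 2Ca² ln(a/R) + H` for `r ≤ a`,
`U = 2Ca² ln(r/R) + H` for `a ≤ r ≤ R` solves the Dirichlet problem for
equation (2) with constant boundary data `H`: it is C¹ in the open disk
`r < R`, satisfies the wave equation in `r < a` and the Laplace equation in
`a < r < R` (so `(∂²U/∂x²)² - (∂²U/∂y²)² = 0` in both open regions), and
equals `H` on the boundary circle `r = R`. -/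
theorem model_dirichlet_eq2_type_changing
    (R H C a : ℝ) (hR : 0 < R) (ha : a ∈ Set.Ioo 0 R)
    (U : ℝ × ℝ → ℝ)
    (hU : ∀ p : ℝ × ℝ, U p =
      if p.1 ^ 2 + p.2 ^ 2 ≤ a ^ 2 then
        C * (p.1 ^ 2 + p.2 ^ 2 - a ^ 2) + 2 * C * a ^ 2 * Real.log (a / R) + H
      else
        2 * C * a ^ 2 * Real.log (Real.sqrt (p.1 ^ 2 + p.2 ^ 2) / R) + H) :
    ContDiffOn ℝ 1 U {p : ℝ × ℝ | p.1 ^ 2 + p.2 ^ 2 < R ^ 2} ∧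
    (∀ p : ℝ × ℝ, p.1 ^ 2 + p.2 ^ 2 < a ^ 2 → pxx U p - pyy U p = 0) ∧
    (∀ p : ℝ × ℝ, a ^ 2 < p.1 ^ 2 + p.2 ^ 2 → p.1 ^ 2 + p.2 ^ 2 < R ^ 2 →
      pxx U p + pyy U p = 0) ∧
    (∀ p : ℝ × ℝ, p.1 ^ 2 + p.2 ^ 2 = R ^ 2 → U p = H) ∧
    (∀ p : ℝ × ℝ, (p.1 ^ 2 + p.2 ^ 2 < a ^ 2 ∨
        (a ^ 2 < p.1 ^ 2 + p.2 ^ 2 ∧ p.1 ^ 2 + p.2 ^ 2 < R ^ 2)) →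
      (pxx U p) ^ 2 - (pyy U p) ^ 2 = 0) := by
  obtain ⟨ha0, haR⟩ := ha
  have ha2 : 0 < a ^ 2 := by positivity
  set K := 2 * C * a ^ 2 * log (a / R) + H
  have hUg : U = fun p => C * linLog (a ^ 2) (p.1 ^ 2 + p.2 ^ 2) + K :=
    funext fun p => (hU p).trans (model_profile_eq_linLog C H hR.ne' ha0 _)
  have hg : ∀ t,
      HasDerivAt (fun t => C * linLog (a ^ 2) t + K) (C * (a ^ 2 / max t (a ^ 2))) t :=
    fun t => ((hasDerivAt_linLog ha2 t).const_mul C).add_const K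
  have hwave : ∀ p : ℝ × ℝ, p.1 ^ 2 + p.2 ^ 2 < a ^ 2 → pxx U p - pyy U p = 0 := by
    intro p hp
    rw [hUg, pxx_sub_pyy_comp_sq_add_sq hg ((hasDerivAt_div_max_of_lt hp).const_mul C)]
    ring
  have hlaplace : ∀ p : ℝ × ℝ, a ^ 2 < p.1 ^ 2 + p.2 ^ 2 → pxx U p + pyy U p = 0 := by
    intro p hp
    rw [hUg, pxx_add_pyy_comp_sq_add_sq hg ((hasDerivAt_div_max_of_gt ha2.le hp).const_mul C),
      max_eq_left hp.le]
    field_simp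
    ring
  refine ⟨?_, hwave, fun p hp _ => hlaplace p hp, fun p hp => ?_, fun p hp => ?_⟩
  · rw [hUg]
    exact (((contDiff_const.mul (contDiff_linLog ha2)).add contDiff_const).comp
      (by fun_prop)).contDiffOn
  · rw [hU p, if_neg (hp ▸ not_le.mpr (pow_lt_pow_left₀ haR ha0.le two_ne_zero)), hp,
      sqrt_sq hR.le, div_self hR.ne', log_one]
    ring
  · rw [sq_sub_sq, mul_eq_zero]
    rcases hp with hp | ⟨hp, -⟩
    exacts [Or.inr (hwave p hp), Or.inl (hlaplace p hp)]
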